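/- Uniqueness of Wick polynomials: if W' is a polynomial of total degree at most |I| in the variables (y_j) such that E[W' · y^{I'}] = Σ_{π∈P(I+I'), every block meets I'} ∏_{A∈π} κ[y_A] holds for all sequences I' with |I'| ≤ N−|I| (where 2|I| ≤ N, moments of order N exist, and the family of random variables is closed under complex conjugation), then W' equals the Wick polynomial :y^I: μ-almost surely. -/

import Mathlib

open MeasureTheory Finset

/-- The moment `E[∏_{l∈A} y_{f(l)}]` of a labeled family of complex random variables. -/
noncomputable def momS {Ω : Type*} [MeasurableSpace Ω] {J L : Type*}
    (μ : Measure Ω) (y : J → Ω → ℂ) (f : L → J) (A : Finset L) : ℂ :=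
  ∫ ω, ∏ l ∈ A, y (f l) ω ∂μ

open scoped Classical in
/-- Set partitions of a finite (label) set `A`. -/
noncomputable def partitionsOf {ι : Type*} (A : Finset ι) : Finset (Finset (Finset ι)) :=
  A.powerset.powerset.filter fun π =>
    (∀ B ∈ π, B.Nonempty) ∧ (∀ B ∈ π, ∀ C ∈ π, B ≠ C → Disjoint B C) ∧ π.sup id = A

/-- The joint cumulant of a labeled family of complex random variables. -/
noncomputable def cumS {Ω : Type*} [MeasurableSpace Ω] {J L : Type*}
    (μ : Measure Ω) (y : J → Ω → ℂ) (f : L → J) (A : Finset L) : ℂ :=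
  ∑ π ∈ partitionsOf A,
    (-1 : ℂ) ^ (π.card - 1) * (Nat.factorial (π.card - 1)) * ∏ B ∈ π, momS μ y f B

/-- The Wick polynomial `:y^I:` (as a random variable) of a labeled family,
defined by the recursion `:y^I: = y^I − Σ_{∅≠E⊆I} E[y^E]·:y^{I∖E}:`. -/
noncomputable def wickS {Ω : Type*} [MeasurableSpace Ω] {J L : Type*} [DecidableEq L]
    (μ : Measure Ω) (y : J → Ω → ℂ) (f : L → J) (A : Finset L) : Ω → ℂ :=
  fun ω => (∏ l ∈ A, y (f l) ω) -
    ∑ E ∈ (A.powerset.filter fun E => E ≠ ∅).attach,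
      momS μ y f E.1 * wickS μ y f (A \ E.1) ω
termination_by A.card
decreasing_by
  have h := E.2
  simp only [Finset.mem_filter, Finset.mem_powerset] at h
  exact Finset.card_lt_card (Finset.sdiff_ssubset h.1 (Finset.nonempty_iff_ne_empty.mpr h.2))

/-!
Expanding moments into cumulants and sorting the blocks of a partition of `I ⊔ I'` by whether
they lie inside `I` gives `E[y^{I ⊔ I'}] = ∑_{E ⊆ I} E[y^E] · T(I ∖ E, I')`, where `T(A, I')` sums
`∏ κ` over the partitions of `A ⊔ I'` all of whose blocks meet `I'`. This is the recursion defining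
`:y^A:`, integrated against `y^{I'}`, so `E[:y^A: · y^{I'}] = T(A, I')` for all `A ⊆ I`. Hence
`D = W' − :y^I:`, a polynomial of degree at most `|I|`, is orthogonal to all monomials of degree at
most `N − |I|`. As the family is closed under conjugation and `|I| ≤ N − |I|`, `conj D` is a
combination of such monomials, so `E[|D|²] = 0` and `D = 0` almost surely.
-/

theorem Finset.powerset_map {α β : Type*} (f : α ↪ β) (s : Finset α) :
    (s.map f).powerset = s.powerset.map (mapEmbedding f).toEmbedding := by
  ext E
  simp [subset_map_iff, eq_comm]

theorem Finset.prod_eq_prod_equivFin_symm {L M : Type*} [CommMonoid M] (s : Finset L)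
    (F : L → M) : ∏ l ∈ s, F l = ∏ k, F (s.equivFin.symm k) := by
  rw [← prod_coe_sort]
  exact Fintype.prod_equiv s.equivFin _ _ fun l => by simp

section SetPartitions

variable {ι : Type*} [DecidableEq ι]

theorem mem_partitionsOf {A : Finset ι} {π : Finset (Finset ι)} :
    π ∈ partitionsOf A ↔
      (∀ B ∈ π, B.Nonempty) ∧ (∀ B ∈ π, ∀ C ∈ π, B ≠ C → Disjoint B C) ∧ π.sup id = A := by
  have hsup : ∀ {π : Finset (Finset ι)}, π.sup id = A → ∀ B ∈ π, B ⊆ A :=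
    fun h B hB => h ▸ le_sup (f := id) hB
  simp only [partitionsOf, mem_filter, mem_powerset]
  constructor
  · rintro ⟨-, h1, h2, h3⟩
    exact ⟨h1, h2, by convert h3⟩
  · rintro ⟨h1, h2, h3⟩
    exact ⟨fun B hB => mem_powerset.2 (hsup h3 B hB), h1, h2, by convert h3⟩

theorem subset_of_mem_partitionsOf {A B : Finset ι} {π : Finset (Finset ι)}
    (hπ : π ∈ partitionsOf A) (hB : B ∈ π) : B ⊆ A :=
  (mem_partitionsOf.1 hπ).2.2 ▸ le_sup (f := id) hB

theorem partitionsOf_empty : partitionsOf (∅ : Finset ι) = {∅} := by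
  ext π
  refine ⟨fun hπ => ?_, fun hπ => by simp [mem_singleton.1 hπ, mem_partitionsOf]⟩
  rw [mem_singleton, eq_empty_iff_forall_notMem]
  intro B hB
  obtain ⟨x, hx⟩ := (mem_partitionsOf.1 hπ).1 B hB
  simpa using subset_of_mem_partitionsOf hπ hB hx

theorem card_pos_of_mem_partitionsOf {A : Finset ι} (hA : A.Nonempty)
    {π : Finset (Finset ι)} (hπ : π ∈ partitionsOf A) : 0 < π.card := by
  rw [card_pos, nonempty_iff_ne_empty]
  rintro rfl
  simp [(mem_partitionsOf.1 hπ).2.2.symm] at hA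

theorem notMem_of_mem_partitionsOf_sdiff {A T : Finset ι} (hT : T.Nonempty)
    {σ : Finset (Finset ι)} (hσ : σ ∈ partitionsOf (A \ T)) : T ∉ σ := fun hTσ => by
  obtain ⟨x, hx⟩ := hT
  simpa [hx] using subset_of_mem_partitionsOf hσ hTσ hx

theorem singleton_mem_partitionsOf {T : Finset ι} (hT : T.Nonempty) : {T} ∈ partitionsOf T := by
  simp [mem_partitionsOf, hT]

theorem union_mem_partitionsOf {Z E : Finset ι} {σ π : Finset (Finset ι)} (hEZ : E ⊆ Z)
    (hσ : σ ∈ partitionsOf E) (hπ : π ∈ partitionsOf (Z \ E)) : σ ∪ π ∈ partitionsOf Z := by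
  have hdisj : ∀ B ∈ σ, ∀ C ∈ π, Disjoint B C := fun B hB C hC =>
    disjoint_sdiff.mono (subset_of_mem_partitionsOf hσ hB) (subset_of_mem_partitionsOf hπ hC)
  obtain ⟨hσ1, hσ2, hσ3⟩ := mem_partitionsOf.1 hσ
  obtain ⟨hπ1, hπ2, hπ3⟩ := mem_partitionsOf.1 hπ
  refine mem_partitionsOf.2 ⟨?_, ?_, ?_⟩
  · simp only [mem_union]
    rintro B (hB | hB)
    exacts [hσ1 B hB, hπ1 B hB]
  · simp only [mem_union]
    rintro B (hB | hB) C (hC | hC) hBC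
    exacts [hσ2 B hB C hC hBC, hdisj B hB C hC, (hdisj C hC B hB).symm, hπ2 B hB C hC hBC]
  · rw [sup_union, hσ3, hπ3, sup_eq_union, union_sdiff_of_subset hEZ]

theorem sup_mem_partitionsOf_sup {Z : Finset ι} {π σ : Finset (Finset ι)}
    (hπ : π ∈ partitionsOf Z) (hσπ : σ ⊆ π) : σ ∈ partitionsOf (σ.sup id) := by
  obtain ⟨h1, h2, -⟩ := mem_partitionsOf.1 hπ
  exact mem_partitionsOf.2 ⟨fun B hB => h1 B (hσπ hB),
    fun B hB C hC => h2 B (hσπ hB) C (hσπ hC), rfl⟩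

theorem sdiff_mem_partitionsOf {Z : Finset ι} {π σ : Finset (Finset ι)}
    (hπ : π ∈ partitionsOf Z) (hσπ : σ ⊆ π) : π \ σ ∈ partitionsOf (Z \ σ.sup id) := by
  obtain ⟨h1, h2, h3⟩ := mem_partitionsOf.1 hπ
  refine mem_partitionsOf.2 ⟨fun B hB => h1 B (mem_sdiff.1 hB).1,
    fun B hB C hC => h2 B (mem_sdiff.1 hB).1 C (mem_sdiff.1 hC).1, ?_⟩
  ext x
  simp only [mem_sup, mem_sdiff, id, ← h3, not_exists, not_and]
  constructor
  · rintro ⟨B, ⟨hB, hBσ⟩, hxB⟩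
    refine ⟨⟨B, hB, hxB⟩, fun C hC hxC => ?_⟩
    have hCB : C ≠ B := fun h => hBσ (h ▸ hC)
    exact disjoint_left.1 (h2 C (hσπ hC) B hB hCB) hxC hxB
  · rintro ⟨⟨B, hB, hxB⟩, hx⟩
    exact ⟨B, ⟨hB, fun hBσ => hx B hBσ hxB⟩, hxB⟩

theorem insert_mem_partitionsOf {A T : Finset ι} (hT : T.Nonempty) (hTA : T ⊆ A)
    {σ : Finset (Finset ι)} (hσ : σ ∈ partitionsOf (A \ T)) : insert T σ ∈ partitionsOf A :=
  union_mem_partitionsOf hTA (singleton_mem_partitionsOf hT) hσ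

theorem erase_mem_partitionsOf {A T : Finset ι} {π : Finset (Finset ι)}
    (hπ : π ∈ partitionsOf A) (hT : T ∈ π) : π.erase T ∈ partitionsOf (A \ T) := by
  simpa [erase_eq] using sdiff_mem_partitionsOf hπ (singleton_subset_iff.2 hT)

theorem sum_partitionsOf_sum_mem {M : Type*} [AddCommMonoid M] (A : Finset ι)
    (F : Finset ι → Finset (Finset ι) → M) :
    ∑ π ∈ partitionsOf A, ∑ T ∈ π, F T π
      = ∑ T ∈ A.powerset with T.Nonempty, ∑ σ ∈ partitionsOf (A \ T), F T (insert T σ) := by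
  rw [sum_sigma', sum_sigma']
  refine sum_bij' (fun p _ => ⟨p.2, p.1.erase p.2⟩) (fun p _ => ⟨insert p.1 p.2, p.1⟩)
    ?_ ?_ ?_ ?_ ?_
  · rintro ⟨π, T⟩ hp
    obtain ⟨hπ, hT⟩ := mem_sigma.1 hp
    simp only [mem_sigma, mem_filter, mem_powerset]
    exact ⟨⟨subset_of_mem_partitionsOf hπ hT, (mem_partitionsOf.1 hπ).1 T hT⟩,
      erase_mem_partitionsOf hπ hT⟩
  · rintro ⟨T, σ⟩ hp
    simp only [mem_sigma, mem_filter, mem_powerset] at hp ⊢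
    exact ⟨insert_mem_partitionsOf hp.1.2 hp.1.1 hp.2, mem_insert_self _ _⟩
  · rintro ⟨π, T⟩ hp
    simp [insert_erase (mem_sigma.1 hp).2]
  · rintro ⟨T, σ⟩ hp
    simp only [mem_sigma, mem_filter, mem_powerset] at hp
    simp [erase_insert (notMem_of_mem_partitionsOf_sdiff hp.1.2 hp.2)]
  · rintro ⟨π, T⟩ hp
    simp [insert_erase (mem_sigma.1 hp).2]

theorem sum_partitionsOf_eq_sum_block {M : Type*} [AddCommMonoid M] {A : Finset ι} {a : ι}
    (ha : a ∈ A) (F : Finset (Finset ι) → M) :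
    ∑ π ∈ partitionsOf A, F π
      = ∑ S ∈ A.powerset with a ∈ S, ∑ σ ∈ partitionsOf (A \ S), F (insert S σ) := by
  have hblock : ∀ π ∈ partitionsOf A, F π = ∑ T ∈ π, if a ∈ T then F π else 0 := by
    intro π hπ
    obtain ⟨h1, h2, h3⟩ := mem_partitionsOf.1 hπ
    obtain ⟨B, hB, haB⟩ := mem_sup.1 (h3 ▸ ha)
    rw [sum_eq_single_of_mem B hB fun C hC hCB => if_neg fun haC =>
      disjoint_left.1 (h2 C hC B hB hCB) haC haB]
    exact (if_pos haB).symm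
  rw [sum_congr rfl hblock, sum_partitionsOf_sum_mem, sum_filter, sum_filter]
  refine sum_congr rfl fun S _ => ?_
  by_cases haS : a ∈ S
  · simp [haS, ne_empty_of_mem haS]
  · simp [haS]

theorem sum_partitionsOf_prod_eq_sum_powerset_filter {R : Type*} [CommSemiring R]
    (Z : Finset ι) (p : ι → Prop) [DecidablePred p] (w : Finset ι → R) :
    ∑ π ∈ partitionsOf Z, ∏ B ∈ π, w B
      = ∑ E ∈ (Z.filter p).powerset, (∑ σ ∈ partitionsOf E, ∏ B ∈ σ, w B) *
          ∑ π ∈ partitionsOf (Z \ E) with ∀ B ∈ π, ¬ ∀ x ∈ B, p x, ∏ B ∈ π, w B := by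
  simp_rw [sum_mul_sum, sum_sigma']
  refine sum_bij'
    (fun π _ => ⟨(π.filter fun B => ∀ x ∈ B, p x).sup id,
      π.filter fun B => ∀ x ∈ B, p x, π.filter fun B => ¬ ∀ x ∈ B, p x⟩)
    (fun q _ => q.2.1 ∪ q.2.2) ?_ ?_ ?_ ?_ ?_
  · intro π hπ
    have hL := filter_subset (fun B => ∀ x ∈ B, p x) π
    simp only [mem_sigma, mem_powerset, mem_filter, filter_not]
    refine ⟨Finset.sup_le fun B hB x hx => mem_filter.2
        ⟨subset_of_mem_partitionsOf hπ (hL hB) hx, (mem_filter.1 hB).2 x hx⟩,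
      sup_mem_partitionsOf_sup hπ hL, sdiff_mem_partitionsOf hπ hL,
      fun B hB hBp => (mem_sdiff.1 hB).2 ?_⟩
    exact mem_filter.2 ⟨(mem_sdiff.1 hB).1, hBp⟩
  · rintro ⟨E, σ, π⟩ hp
    simp only [mem_sigma, mem_powerset, mem_filter] at hp
    exact union_mem_partitionsOf (hp.1.trans (filter_subset _ _)) hp.2.1 hp.2.2.1
  · intro π _
    exact filter_union_filter_not_eq _ π
  · rintro ⟨E, σ, π⟩ hp
    simp only [mem_sigma, mem_powerset, mem_filter] at hp
    obtain ⟨hE, hσ, -, hπL⟩ := hp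
    have hσL : ∀ B ∈ σ, ∀ x ∈ B, p x := fun B hB x hx =>
      (mem_filter.1 (hE (subset_of_mem_partitionsOf hσ hB hx))).2
    have h1 : (σ ∪ π).filter (fun B => ∀ x ∈ B, p x) = σ := by
      rw [filter_union, filter_true_of_mem hσL, filter_false_of_mem hπL, union_empty]
    have h2 : (σ ∪ π).filter (fun B => ¬ ∀ x ∈ B, p x) = π := by
      rw [filter_union, filter_false_of_mem fun B hB h => h (hσL B hB),
        filter_true_of_mem hπL, empty_union]
    simp only [h1, h2, (mem_partitionsOf.1 hσ).2.2]
  · intro π _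
    exact (prod_filter_mul_prod_filter_not π (fun B => ∀ x ∈ B, p x) w).symm

end SetPartitions

section MomentCumulant

variable {ι : Type*} [DecidableEq ι] {R : Type*} [CommRing R]

noncomputable def cumulant (M : Finset ι → R) (A : Finset ι) : R :=
  ∑ π ∈ partitionsOf A, (-1 : R) ^ (π.card - 1) * (π.card - 1).factorial * ∏ B ∈ π, M B

/-- When `M ∅ = 1`, this is the inverse of `M` for the subset convolution
`(F ⋆ G) X = ∑ T ⊆ X, F T * G (X \ T)` (see `sum_mul_momentInv_sdiff`). -/
noncomputable def momentInv (M : Finset ι → R) (U : Finset ι) : R :=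
  ∑ τ ∈ partitionsOf U, (-1 : R) ^ τ.card * τ.card.factorial * ∏ B ∈ τ, M B

theorem momentInv_empty (M : Finset ι → R) : momentInv M ∅ = 1 := by
  simp [momentInv, partitionsOf_empty]

theorem momentInv_eq_neg_sum (M : Finset ι → R) {U : Finset ι} (hU : U.Nonempty) :
    momentInv M U = -∑ T ∈ U.powerset with T.Nonempty, M T * momentInv M (U \ T) := by
  have hsplit : momentInv M U = ∑ τ ∈ partitionsOf U, ∑ _T ∈ τ,
      (-1 : R) ^ τ.card * (τ.card - 1).factorial * ∏ B ∈ τ, M B := by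
    refine sum_congr rfl fun τ hτ => ?_
    have hpos := card_pos_of_mem_partitionsOf hU hτ
    rw [sum_const, nsmul_eq_mul, ← Nat.mul_factorial_pred hpos.ne', Nat.cast_mul]
    ring
  rw [hsplit, sum_partitionsOf_sum_mem, ← sum_neg_distrib]
  refine sum_congr rfl fun T hT => ?_
  obtain ⟨-, hT⟩ := mem_filter.1 hT
  rw [momentInv, mul_sum, ← sum_neg_distrib]
  refine sum_congr rfl fun σ hσ => ?_
  have hTσ := notMem_of_mem_partitionsOf_sdiff hT hσ
  rw [card_insert_of_notMem hTσ, prod_insert hTσ, Nat.add_sub_cancel]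
  ring

theorem sum_mul_momentInv_sdiff {M : Finset ι → R} (hM : M ∅ = 1) {X : Finset ι}
    (hX : X.Nonempty) : ∑ T ∈ X.powerset, M T * momentInv M (X \ T) = 0 := by
  have hempty : {T ∈ X.powerset | ¬T.Nonempty} = {∅} := by
    ext T
    simp +contextual [not_nonempty_iff_eq_empty]
  rw [← sum_filter_add_sum_filter_not _ (fun T => T.Nonempty), hempty, sum_singleton, hM,
    one_mul, sdiff_empty, momentInv_eq_neg_sum M hX, add_neg_cancel]

theorem cumulant_eq_sum_mul_momentInv (M : Finset ι → R) {S : Finset ι} {a : ι} (ha : a ∈ S) :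
    cumulant M S = ∑ T ∈ S.powerset with a ∈ T, M T * momentInv M (S \ T) := by
  rw [cumulant, sum_partitionsOf_eq_sum_block ha]
  refine sum_congr rfl fun T hT => ?_
  obtain ⟨-, haT⟩ := mem_filter.1 hT
  rw [momentInv, mul_sum]
  refine sum_congr rfl fun σ hσ => ?_
  have hTσ := notMem_of_mem_partitionsOf_sdiff ⟨a, haT⟩ hσ
  rw [card_insert_of_notMem hTσ, prod_insert hTσ, Nat.add_sub_cancel]
  ring

theorem sum_sum_subset_chain {M : Type*} [AddCommMonoid M] (A : Finset ι) (a : ι)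
    (F : Finset ι → Finset ι → Finset ι → M) :
    ∑ S ∈ A.powerset with a ∈ S, ∑ T ∈ S.powerset with a ∈ T, F T (S \ T) (A \ S)
      = ∑ T ∈ A.powerset with a ∈ T, ∑ V ∈ (A \ T).powerset, F T ((A \ T) \ V) V := by
  rw [sum_sigma', sum_sigma']
  refine sum_bij' (fun p _ => ⟨p.2, A \ p.1⟩) (fun p _ => ⟨A \ p.2, p.1⟩) ?_ ?_ ?_ ?_ ?_
  · rintro ⟨S, T⟩ h
    simp only [mem_sigma, mem_filter, mem_powerset] at h ⊢
    exact ⟨⟨h.2.1.trans h.1.1, h.2.2⟩, sdiff_subset_sdiff subset_rfl h.2.1⟩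
  · rintro ⟨T, V⟩ h
    simp only [mem_sigma, mem_filter, mem_powerset, subset_sdiff] at h ⊢
    exact ⟨⟨sdiff_subset, mem_sdiff.2 ⟨h.1.1 h.1.2, fun haV => disjoint_left.1 h.2.2 haV h.1.2⟩⟩,
      ⟨h.1.1, h.2.2.symm⟩, h.1.2⟩
  · rintro ⟨S, T⟩ h
    simp only [mem_sigma, mem_filter, mem_powerset] at h
    simp [Finset.sdiff_sdiff_eq_self h.1.1]
  · rintro ⟨T, V⟩ h
    simp only [mem_sigma, mem_filter, mem_powerset, subset_sdiff] at h
    simp [Finset.sdiff_sdiff_eq_self h.2.1]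
  · rintro ⟨S, T⟩ h
    simp only [mem_sigma, mem_filter, mem_powerset] at h
    have hST : S \ T = (A \ T) \ (A \ S) := by
      ext x
      have := @h.1.1 x
      simp only [mem_sdiff]
      tauto
    rw [hST]

theorem sum_cumulant_mul_sdiff {M : Finset ι → R} (hM : M ∅ = 1) {A : Finset ι} {a : ι}
    (ha : a ∈ A) : ∑ S ∈ A.powerset with a ∈ S, cumulant M S * M (A \ S) = M A := by
  calc ∑ S ∈ A.powerset with a ∈ S, cumulant M S * M (A \ S)
      = ∑ S ∈ A.powerset with a ∈ S, ∑ T ∈ S.powerset with a ∈ T,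
          M T * (M (A \ S) * momentInv M (S \ T)) := by
        refine sum_congr rfl fun S hS => ?_
        rw [cumulant_eq_sum_mul_momentInv M (mem_filter.1 hS).2, sum_mul]
        exact sum_congr rfl fun T _ => by ring
    _ = ∑ T ∈ A.powerset with a ∈ T,
          M T * ∑ V ∈ (A \ T).powerset, M V * momentInv M ((A \ T) \ V) := by
        simp_rw [mul_sum]
        exact sum_sum_subset_chain A a fun T U V => M T * (M V * momentInv M U)
    _ = M A := by
        rw [sum_eq_single_of_mem A (mem_filter.2 ⟨mem_powerset_self A, ha⟩)]
        · simp [momentInv_empty, hM]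
        · intro T hT hTA
          have hTA' := mem_powerset.1 (mem_filter.1 hT).1
          rw [sum_mul_momentInv_sdiff hM (sdiff_nonempty.2 fun h => hTA (hTA'.antisymm h)),
            mul_zero]

theorem sum_partitionsOf_prod_cumulant {M : Finset ι → R} (hM : M ∅ = 1) (A : Finset ι) :
    ∑ π ∈ partitionsOf A, ∏ B ∈ π, cumulant M B = M A := by
  induction A using Finset.strongInduction with
  | H A ih =>
    obtain rfl | ⟨a, ha⟩ := A.eq_empty_or_nonempty
    · simp [partitionsOf_empty, hM]
    rw [sum_partitionsOf_eq_sum_block ha, ← sum_cumulant_mul_sdiff hM ha]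
    refine sum_congr rfl fun S hS => ?_
    obtain ⟨hSA, haS⟩ := mem_filter.1 hS
    rw [← ih _ (sdiff_ssubset (mem_powerset.1 hSA) ⟨a, haS⟩), mul_sum]
    refine sum_congr rfl fun σ hσ => ?_
    rw [prod_insert (notMem_of_mem_partitionsOf_sdiff ⟨a, haS⟩ hσ)]

theorem eq_sum_powerset_filter_mul_sum_cumulant {M : Finset ι → R} (hM : M ∅ = 1)
    (Z : Finset ι) (p : ι → Prop) [DecidablePred p] :
    M Z = ∑ E ∈ (Z.filter p).powerset, M E *
      ∑ π ∈ partitionsOf (Z \ E) with ∀ B ∈ π, ¬ ∀ x ∈ B, p x, ∏ B ∈ π, cumulant M B := by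
  rw [← sum_partitionsOf_prod_cumulant hM Z, sum_partitionsOf_prod_eq_sum_powerset_filter Z p]
  simp_rw [sum_partitionsOf_prod_cumulant hM]

end MomentCumulant

theorem ae_eq_zero_of_integral_mul_conj_eq_zero {Ω : Type*} [MeasurableSpace Ω] {μ : Measure Ω}
    {f : Ω → ℂ} (hf : Integrable (fun ω => f ω * starRingEnd ℂ (f ω)) μ)
    (h0 : ∫ ω, f ω * starRingEnd ℂ (f ω) ∂μ = 0) : f =ᵐ[μ] 0 := by
  have hsq : Integrable (fun ω => ‖f ω‖ ^ 2) μ :=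
    hf.norm.congr (ae_of_all _ fun ω => by simp [sq])
  simp_rw [Complex.mul_conj', ← Complex.ofReal_pow, integral_complex_ofReal,
    Complex.ofReal_eq_zero] at h0
  filter_upwards [(integral_eq_zero_iff_of_nonneg (fun ω => by positivity) hsq).1 h0] with ω hω
  simpa using hω

section MonomialSpan

variable {Ω J : Type*} (y : J → Ω → ℂ)

def monomialSpan (n : ℕ) : Submodule ℂ (Ω → ℂ) :=
  Submodule.span ℂ {f | ∃ m ≤ n, ∃ g : Fin m → J, f = fun ω => ∏ k, y (g k) ω}

variable {y}

theorem monomialSpan_mono {p q : ℕ} (h : p ≤ q) : monomialSpan y p ≤ monomialSpan y q :=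
  Submodule.span_mono fun _ ⟨m, hm, g, hg⟩ => ⟨m, hm.trans h, g, hg⟩

theorem prod_mem_monomialSpan {n : ℕ} {L : Type*} {s : Finset L} (f : L → J)
    (hs : s.card ≤ n) : (fun ω => ∏ l ∈ s, y (f l) ω) ∈ monomialSpan y n :=
  Submodule.subset_span ⟨s.card, hs, fun k => f (s.equivFin.symm k),
    funext fun _ => prod_eq_prod_equivFin_symm s _⟩

theorem eval_mem_monomialSpan {n : ℕ} {p : MvPolynomial J ℂ} (hp : p.totalDegree ≤ n) :
    (fun ω => MvPolynomial.eval (fun j => y j ω) p) ∈ monomialSpan y n := by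
  have hsum : (fun ω => MvPolynomial.eval (fun j => y j ω) p) = ∑ d ∈ p.support,
      p.coeff d • fun ω => ∏ x ∈ d.support.sigma (fun j => range (d j)), y x.1 ω := by
    ext ω
    simp [MvPolynomial.eval_eq, prod_sigma]
  rw [hsum]
  refine Submodule.sum_mem _ fun d hd => Submodule.smul_mem _ _ (prod_mem_monomialSpan _ ?_)
  simp only [card_sigma, card_range]
  exact (MvPolynomial.le_totalDegree hd).trans hp

theorem conj_mem_monomialSpan (hconj : ∀ j, ∃ j', ∀ ω, y j' ω = starRingEnd ℂ (y j ω))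
    {n : ℕ} {f : Ω → ℂ} (hf : f ∈ monomialSpan y n) :
    (fun ω => starRingEnd ℂ (f ω)) ∈ monomialSpan y n := by
  induction hf using Submodule.span_induction with
  | mem f hf =>
    obtain ⟨m, hm, g, rfl⟩ := hf
    choose c hc using hconj
    exact Submodule.subset_span ⟨m, hm, c ∘ g, funext fun ω => by simp [hc]⟩
  | zero => convert (monomialSpan y n).zero_mem using 1; ext; simp
  | add f h _ _ hf hh => convert add_mem hf hh using 1; ext; simp
  | smul a f _ hf => convert Submodule.smul_mem _ (starRingEnd ℂ a) hf using 1; ext; simp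

variable [MeasurableSpace Ω] {μ : Measure Ω} {N : ℕ}

theorem integrable_prod_of_card_le
    (hint : ∀ m ≤ N, ∀ g : Fin m → J, Integrable (fun ω => ∏ k, y (g k) ω) μ)
    {L : Type*} {s : Finset L} (f : L → J) (hs : s.card ≤ N) :
    Integrable (fun ω => ∏ l ∈ s, y (f l) ω) μ := by
  simpa only [prod_eq_prod_equivFin_symm s] using hint s.card hs _

theorem integrable_mul_of_mem_monomialSpan
    (hint : ∀ m ≤ N, ∀ g : Fin m → J, Integrable (fun ω => ∏ k, y (g k) ω) μ)
    {p q : ℕ} (hpq : p + q ≤ N) {f h : Ω → ℂ}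
    (hf : f ∈ monomialSpan y p) (hh : h ∈ monomialSpan y q) :
    Integrable (fun ω => f ω * h ω) μ := by
  show Integrable (f * h) μ
  induction hf using Submodule.span_induction with
  | mem f hf =>
    obtain ⟨m₁, hm₁, g₁, rfl⟩ := hf
    induction hh using Submodule.span_induction with
    | mem h hh =>
      obtain ⟨m₂, hm₂, g₂, rfl⟩ := hh
      have hprod : ((fun ω => ∏ k, y (g₁ k) ω) * fun ω => ∏ k, y (g₂ k) ω)
          = fun ω => ∏ x ∈ univ.disjSum univ, y (Sum.elim g₁ g₂ x) ω := by
        ext ω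
        simp
      rw [hprod]
      exact integrable_prod_of_card_le hint _ (by simp; omega)
    | zero => simp
    | add h₁ h₂ _ _ ih₁ ih₂ => simpa [mul_add] using ih₁.add ih₂
    | smul a h _ ih => simpa [mul_smul_comm] using ih.smul a
  | zero => simp
  | add f₁ f₂ _ _ ih₁ ih₂ => simpa [add_mul] using ih₁.add ih₂
  | smul a f _ ih => simpa [smul_mul_assoc] using ih.smul a

theorem integral_mul_eq_zero_of_mem_monomialSpan
    (hint : ∀ m ≤ N, ∀ g : Fin m → J, Integrable (fun ω => ∏ k, y (g k) ω) μ)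
    {p q : ℕ} (hpq : p + q ≤ N) {D h : Ω → ℂ}
    (hD : D ∈ monomialSpan y p)
    (horth : ∀ m ≤ q, ∀ g : Fin m → J, ∫ ω, D ω * ∏ k, y (g k) ω ∂μ = 0)
    (hh : h ∈ monomialSpan y q) : ∫ ω, D ω * h ω ∂μ = 0 := by
  induction hh using Submodule.span_induction with
  | mem h hh =>
    obtain ⟨m, hm, g, rfl⟩ := hh
    exact horth m hm g
  | zero => simp
  | add h₁ h₂ hh₁ hh₂ ih₁ ih₂ =>
    simp only [Pi.add_apply, mul_add]
    rw [integral_add (integrable_mul_of_mem_monomialSpan hint hpq hD hh₁)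
      (integrable_mul_of_mem_monomialSpan hint hpq hD hh₂), ih₁, ih₂, add_zero]
  | smul a h _ ih =>
    simp only [Pi.smul_apply, smul_eq_mul, mul_left_comm _ a, integral_const_mul, ih, mul_zero]

theorem ae_eq_zero_of_integral_mul_prod_eq_zero
    (hint : ∀ m ≤ N, ∀ g : Fin m → J, Integrable (fun ω => ∏ k, y (g k) ω) μ)
    (hconj : ∀ j, ∃ j', ∀ ω, y j' ω = starRingEnd ℂ (y j ω)) {p q : ℕ} (hpq : p ≤ q)
    (hN : p + q ≤ N) {D : Ω → ℂ} (hD : D ∈ monomialSpan y p)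
    (horth : ∀ m ≤ q, ∀ g : Fin m → J, ∫ ω, D ω * ∏ k, y (g k) ω ∂μ = 0) : D =ᵐ[μ] 0 :=
  have hconjD := monomialSpan_mono hpq (conj_mem_monomialSpan hconj hD)
  ae_eq_zero_of_integral_mul_conj_eq_zero (integrable_mul_of_mem_monomialSpan hint hN hD hconjD)
    (integral_mul_eq_zero_of_mem_monomialSpan hint hN hD horth hconjD)

end MonomialSpan

section Wick

variable {Ω J L : Type*} [MeasurableSpace Ω] (μ : Measure Ω) (y : J → Ω → ℂ)

theorem momS_empty [IsProbabilityMeasure μ] (f : L → J) : momS μ y f ∅ = 1 := by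
  simp [momS]

theorem wickS_apply [DecidableEq L] (f : L → J) (A : Finset L) (ω : Ω) :
    wickS μ y f A ω = ∏ l ∈ A, y (f l) ω -
      ∑ E ∈ A.powerset with E ≠ ∅, momS μ y f E * wickS μ y f (A \ E) ω := by
  rw [wickS, sum_attach _ fun E => momS μ y f E * wickS μ y f (A \ E) ω]

theorem wickS_mem_monomialSpan [DecidableEq L] (f : L → J) {n : ℕ} {A : Finset L}
    (hA : A.card ≤ n) : wickS μ y f A ∈ monomialSpan y n := by
  induction A using Finset.strongInduction with
  | H A ih =>
    have hrec : wickS μ y f A = (fun ω => ∏ l ∈ A, y (f l) ω) -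
        ∑ E ∈ A.powerset with E ≠ ∅, momS μ y f E • wickS μ y f (A \ E) := by
      ext ω
      rw [wickS_apply]
      simp only [Pi.sub_apply, Finset.sum_apply, Pi.smul_apply, smul_eq_mul]
    rw [hrec]
    refine sub_mem (prod_mem_monomialSpan f hA) (sum_mem fun E hE => Submodule.smul_mem _ _ ?_)
    obtain ⟨hEA, hE⟩ := mem_filter.1 hE
    have hssub := sdiff_ssubset (mem_powerset.1 hEA) (nonempty_iff_ne_empty.2 hE)
    exact ih _ hssub ((card_le_card hssub.subset).trans hA)

variable {K : Type*} [DecidableEq L] [DecidableEq K] [Fintype K] (I : L → J) (g : K → J)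

noncomputable def truncatedCumulantSum (A : Finset L) : ℂ :=
  ∑ π ∈ partitionsOf (A.disjSum (univ : Finset K)),
    if ∀ B ∈ π, ∃ k : K, Sum.inr k ∈ B then ∏ B ∈ π, cumS μ y (Sum.elim I g) B else 0

theorem momS_disjSum_univ_eq_sum [IsProbabilityMeasure μ] (A : Finset L) :
    momS μ y (Sum.elim I g) (A.disjSum univ)
      = ∑ E ∈ A.powerset, momS μ y I E * truncatedCumulantSum μ y I g (A \ E) := by
  have hleft : (A.disjSum univ).filter (fun x => x.isLeft) = A.map (.inl : L ↪ L ⊕ K) := by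
    ext (x | x) <;> simp
  rw [eq_sum_powerset_filter_mul_sum_cumulant (momS_empty μ y _) _ (fun x => x.isLeft), hleft,
    powerset_map, sum_map]
  refine sum_congr rfl fun E _ => ?_
  have hsdiff : A.disjSum univ \ E.map .inl = (A \ E).disjSum (univ : Finset K) := by
    ext (x | x) <;> simp
  have hmeets : ∀ B : Finset (L ⊕ K), (¬ ∀ x ∈ B, x.isLeft) ↔ ∃ k, Sum.inr k ∈ B := by
    simp
  simp only [RelEmbedding.coe_toEmbedding, mapEmbedding_apply, hsdiff, truncatedCumulantSum,
    sum_filter, hmeets]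
  congr 1
  simp [momS, prod_map]

theorem integral_wickS_mul_prod [IsProbabilityMeasure μ] {N : ℕ}
    (hint : ∀ m ≤ N, ∀ g : Fin m → J, Integrable (fun ω => ∏ k, y (g k) ω) μ)
    {A : Finset L} (hA : A.card + Fintype.card K ≤ N) :
    ∫ ω, wickS μ y I A ω * ∏ k, y (g k) ω ∂μ = truncatedCumulantSum μ y I g A := by
  induction A using Finset.strongInduction with
  | H A ih =>
    have hg : (fun ω => ∏ k, y (g k) ω) ∈ monomialSpan y (Fintype.card K) :=
      prod_mem_monomialSpan g le_rfl
    have hterm : ∀ E : Finset L,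
        Integrable (fun ω => momS μ y I E * (wickS μ y I (A \ E) ω * ∏ k, y (g k) ω)) μ :=
      fun E => (integrable_mul_of_mem_monomialSpan hint hA
        (wickS_mem_monomialSpan μ y I (card_le_card sdiff_subset)) hg).const_mul _
    have hrec : (fun ω => wickS μ y I A ω * ∏ k, y (g k) ω) = fun ω =>
        ∏ x ∈ A.disjSum univ, y (Sum.elim I g x) ω -
          ∑ E ∈ A.powerset with E ≠ ∅, momS μ y I E * (wickS μ y I (A \ E) ω * ∏ k, y (g k) ω) := by
      ext ω
      rw [wickS_apply]
      simp only [prod_disjSum, Sum.elim_inl, Sum.elim_inr, sub_mul, sum_mul, mul_assoc]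
    have hprod : Integrable (fun ω => ∏ x ∈ A.disjSum univ, y (Sum.elim I g x) ω) μ :=
      integrable_prod_of_card_le hint _ (by simpa using hA)
    rw [hrec, integral_sub hprod (integrable_finsetSum _ fun E _ => hterm E),
      integral_finsetSum _ fun E _ => hterm E]
    have hcorr : ∀ E ∈ A.powerset.filter (· ≠ ∅),
        ∫ ω, momS μ y I E * (wickS μ y I (A \ E) ω * ∏ k, y (g k) ω) ∂μ
          = momS μ y I E * truncatedCumulantSum μ y I g (A \ E) := by
      intro E hE
      obtain ⟨hEA, hE⟩ := mem_filter.1 hE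
      rw [integral_const_mul, ih _ (sdiff_ssubset (mem_powerset.1 hEA) (nonempty_iff_ne_empty.2 hE))
        ((Nat.add_le_add_right (card_le_card sdiff_subset) _).trans hA)]
    rw [sum_congr rfl hcorr, ← momS, momS_disjSum_univ_eq_sum, filter_ne',
      ← add_sum_erase _ _ (empty_mem_powerset A), momS_empty, sdiff_empty, one_mul,
      add_sub_cancel_right]

end Wick

open scoped Classical in
theorem wick_uniqueness_general {Ω : Type*} [MeasurableSpace Ω] {J : Type*}
    (μ : Measure Ω) [IsProbabilityMeasure μ] (y : J → Ω → ℂ)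
    (N n : ℕ) (I : Fin n → J) (h2n : 2 * n ≤ N)
    (hconj : ∀ j : J, ∃ j' : J, ∀ ω, y j' ω = starRingEnd ℂ (y j ω))
    (hint : ∀ m : ℕ, m ≤ N → ∀ g : Fin m → J,
      Integrable (fun ω => ∏ k, y (g k) ω) μ)
    (W' : MvPolynomial J ℂ) (hdeg : W'.totalDegree ≤ n)
    (hW : ∀ m : ℕ, m ≤ N - n → ∀ g : Fin m → J,
      (∫ ω, MvPolynomial.eval (fun j => y j ω) W' * ∏ k, y (g k) ω ∂μ)
        = ∑ π ∈ partitionsOf (Finset.univ : Finset (Fin n ⊕ Fin m)),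
            if ∀ A ∈ π, ∃ k : Fin m, Sum.inr k ∈ A then
              ∏ A ∈ π, cumS μ y (Sum.elim I g) A
            else 0) :
    ∀ᵐ ω ∂μ, MvPolynomial.eval (fun j => y j ω) W'
      = wickS μ y I (Finset.univ : Finset (Fin n)) ω := by
  have hW' := eval_mem_monomialSpan (y := y) hdeg
  have hwick : wickS μ y I univ ∈ monomialSpan y n := wickS_mem_monomialSpan μ y I (by simp)
  have horth : ∀ m ≤ N - n, ∀ g : Fin m → J, ∫ ω, (MvPolynomial.eval (fun j => y j ω) W'
      - wickS μ y I univ ω) * ∏ k, y (g k) ω ∂μ = 0 := by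
    intro m hm g
    have hg : (fun ω => ∏ k, y (g k) ω) ∈ monomialSpan y m :=
      Submodule.subset_span ⟨m, le_rfl, g, rfl⟩
    have hnm : n + m ≤ N := by omega
    simp_rw [sub_mul]
    rw [integral_sub (integrable_mul_of_mem_monomialSpan hint hnm hW' hg)
      (integrable_mul_of_mem_monomialSpan hint hnm hwick hg), hW m hm g,
      integral_wickS_mul_prod μ y I g hint (by simpa using hnm), sub_eq_zero,
      truncatedCumulantSum, univ_disjSum_univ]
    congr! 2
  filter_upwards [ae_eq_zero_of_integral_mul_prod_eq_zero hint hconj (by omega : n ≤ N - n)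
    (by omega) (sub_mem hW' hwick) horth] with ω hω
  exact sub_eq_zero.1 hω

open scoped Classical in
/-- uniqueness of Wick polynomials. Any polynomial `W'` of total degree
at most `|I|` whose correlations with all monomials `y^{I'}`, `|I'| ≤ N − |I|`,
are given by the truncated moments-to-cumulants formula coincides `μ`-a.s.
with the Wick polynomial `:y^I:`. -/
theorem wick_uniqueness {Ω : Type*} [MeasurableSpace Ω] {J : Type*}
    (μ : Measure Ω) [IsProbabilityMeasure μ] (y : J → Ω → ℂ)
    (N n : ℕ) (I : Fin n → J) (h2n : 2 * n ≤ N)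
    (hmeas : ∀ j, AEMeasurable (y j) μ)
    (hconj : ∀ j : J, ∃ j' : J, ∀ ω, y j' ω = starRingEnd ℂ (y j ω))
    (hint : ∀ m : ℕ, m ≤ N → ∀ g : Fin m → J,
      Integrable (fun ω => ∏ k, y (g k) ω) μ)
    (W' : MvPolynomial J ℂ) (hdeg : W'.totalDegree ≤ n)
    (hW : ∀ m : ℕ, m ≤ N - n → ∀ g : Fin m → J,
      (∫ ω, MvPolynomial.eval (fun j => y j ω) W' * ∏ k, y (g k) ω ∂μ)
        = ∑ π ∈ partitionsOf (Finset.univ : Finset (Fin n ⊕ Fin m)),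
            if ∀ A ∈ π, ∃ k : Fin m, Sum.inr k ∈ A then
              ∏ A ∈ π, cumS μ y (Sum.elim I g) A
            else 0) :
    ∀ᵐ ω ∂μ, MvPolynomial.eval (fun j => y j ω) W'
      = wickS μ y I (Finset.univ : Finset (Fin n)) ω :=
  wick_uniqueness_general μ y N n I h2n hconj hint W' hdeg hW
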